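/- Let f̃ ∈ H*_T(G̃, s) and define p : S_n → ℂ[t_1,...,t_n] by (t_{w(d+1)} − t_{w(d)})·p(w) = f̃(w) − f̃(°w). Then p ∈ H*_T(G_-), i.e. p(w) ≡ p(w(i,j)) mod (t_{w(i)} − t_{w(j)}) for all j < i ≤ h_-(j), and moreover p(w) ≡ p(wτ) mod (t_{w(d+1)} − t_{w(d)}) for all w ∈ S_n. -/

import Mathlib

/-!
Write `L w = t_{w(d+1)} − t_{w(d)}`, so that `L w · p w = f̃(w) − f̃(°w)`. Along an edge
`w — w(i,j)` of `G₋` with label `α = t_{w(i)} − t_{w(j)}`, both `f̃(w) − f̃(w(i,j))` and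
`f̃(°w) − f̃(°w(i,j))` are divisible by `α` (the edges of `G₋` are edges of `G` because
`h₋ ≤ h`), and `L w ≡ L (w(i,j)) mod α`; hence `α ∣ L w · (p w − p (w(i,j)))`. Since `α` is a
prime of `ℂ[t]`, it divides `p w − p (w(i,j))` unless `α = ±L w`, i.e. unless the edge is `τ`.
For `τ` itself `L (wτ) = −L w`, and the 4-gon condition says exactly
`(L w)² ∣ L w · (p w − p (wτ))`.
-/

open MvPolynomial

/-- The GKM graph cohomology of `X(h)` (0-based conventions): maps
`f : Sₙ → ℂ[t₁,…,tₙ]` with `f(w) − f(w·(i,j))` divisible by `t_{w(i)} − t_{w(j)}`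
for all edges `{w, w(i,j)}`, `j < i ≤ h(j)`. -/
def HTX (n : ℕ) (h : Fin n → Fin n) :
    Set (Equiv.Perm (Fin n) → MvPolynomial (Fin n) ℂ) :=
  {f | ∀ (w : Equiv.Perm (Fin n)) (i j : Fin n), j < i → i ≤ h j →
    (X (w i) - X (w j)) ∣ (f w - f (w * Equiv.swap i j))}

/-- The graph cohomology of `°G`: vertices `°w` for `w ∈ Sₙ`, edges `{°w, °w(i,j)}`
for `j < i ≤ h₋(j)` together with `{°w, °w(d+1, d₀)}`, labeled `t_{w(i)} − t_{w(j)}`. -/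
def HToG (n : ℕ) (hm : Fin n → Fin n) (d₀ dp : Fin n) :
    Set (Equiv.Perm (Fin n) → MvPolynomial (Fin n) ℂ) :=
  {f | ∀ (w : Equiv.Perm (Fin n)) (i j : Fin n), j < i →
    (i ≤ hm j ∨ (i = dp ∧ j = d₀)) →
    (X (w i) - X (w j)) ∣ (f w - f (w * Equiv.swap i j))}

/-- The graph cohomology `H*_T(G̃, s)` of the labeled graph `G̃` with sign `s`:
vertices `Sₙ ⊔ °Sₙ` (`Sum.inl w = w`, `Sum.inr w = °w`), edges of `G = G_X(h)`,
edges of `°G`, edges `{w, °w}` labeled `t_{w(d+1)} − t_{w(d)}`, together with the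
4-gon condition `f(w) − f(°w) + f(wτ) − f(°wτ) ≡ 0 mod (t_{w(d+1)} − t_{w(d)})²`,
where `τ = (d, d+1)`. -/
def HTtilde (n : ℕ) (h hm : Fin n → Fin n) (d₀ d dp : Fin n) :
    Set (Equiv.Perm (Fin n) ⊕ Equiv.Perm (Fin n) → MvPolynomial (Fin n) ℂ) :=
  {f | (∀ (w : Equiv.Perm (Fin n)) (i j : Fin n), j < i → i ≤ h j →
          (X (w i) - X (w j)) ∣ (f (Sum.inl w) - f (Sum.inl (w * Equiv.swap i j)))) ∧
       (∀ (w : Equiv.Perm (Fin n)) (i j : Fin n), j < i →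
          (i ≤ hm j ∨ (i = dp ∧ j = d₀)) →
          (X (w i) - X (w j)) ∣ (f (Sum.inr w) - f (Sum.inr (w * Equiv.swap i j)))) ∧
       (∀ w : Equiv.Perm (Fin n),
          (X (w dp) - X (w d)) ∣ (f (Sum.inl w) - f (Sum.inr w))) ∧
       (∀ w : Equiv.Perm (Fin n),
          (X (w dp) - X (w d)) ^ 2 ∣
            (f (Sum.inl w) - f (Sum.inr w)
              + f (Sum.inl (w * Equiv.swap d dp)) - f (Sum.inr (w * Equiv.swap d dp))))}

theorem sub_dvd_apply_swap_sub {ι R : Type*} [DecidableEq ι] [CommRing R] (x : ι → R)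
    (i j k : ι) :
    x i - x j ∣ x (Equiv.swap i j k) - x k := by
  rcases eq_or_ne k i with rfl | hki
  · exact ⟨-1, by simp⟩
  rcases eq_or_ne k j with rfl | hkj
  · exact ⟨1, by simp⟩
  simp [Equiv.swap_apply_of_ne_of_ne hki hkj]

theorem Prime.dvd_sub_of_dvd_mul_sub_mul {R : Type*} [CommRing R] {α L L' p p' : R}
    (hα : Prime α) (hL : ¬α ∣ L) (hLL' : α ∣ L - L') (h : α ∣ L * p - L' * p') : α ∣ p - p' := by
  have : α ∣ L * (p - p') := by
    convert h.sub (hLL'.mul_right p') using 1; ring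
  exact (hα.dvd_or_dvd this).resolve_left hL

namespace MvPolynomial

variable {σ R : Type*}

theorem prime_X_sub_X [CommRing R] [IsDomain R] {a b : σ} (hab : a ≠ b) :
    Prime (X a - X b : MvPolynomial σ R) := by
  classical
  let e := (renameEquiv R (Equiv.optionSubtypeNe a).symm).trans (optionEquivLeft R {c // c ≠ a})
  have : e (X a - X b) = Polynomial.X - Polynomial.C (X ⟨b, hab.symm⟩) := by
    simp [e, dif_neg hab.symm, optionEquivLeft_X_none, optionEquivLeft_X_some]
  rw [← MulEquiv.prime_iff e.toMulEquiv]
  exact this ▸ Polynomial.prime_X_sub_C _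

theorem X_sub_X_not_dvd [CommRing R] [Nontrivial R] {a b u v : σ} (huv : u ≠ v)
    (hne : s(u, v) ≠ s(a, b)) : ¬(X a - X b : MvPolynomial σ R) ∣ X u - X v := by
  classical
  obtain ⟨k, hk, hka, hkb⟩ : ∃ k ∈ s(u, v), k ≠ a ∧ k ≠ b := by
    by_contra! H
    simp only [Sym2.mem_iff, forall_eq_or_imp, forall_eq] at H
    rw [Ne, Sym2.eq_iff] at hne
    grind
  rintro ⟨q, hq⟩
  have := congrArg (eval (Pi.single k 1)) hq
  rcases Sym2.mem_iff.1 hk with rfl | rfl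
  · simp [hka.symm, hkb.symm, huv.symm] at this
  · simp [hka.symm, hkb.symm, huv] at this

end MvPolynomial

section Quotient

variable {σ R : Type*} [DecidableEq σ] [CommRing R] [IsDomain R]
  {ft : Equiv.Perm σ ⊕ Equiv.Perm σ → MvPolynomial σ R} {p : Equiv.Perm σ → MvPolynomial σ R}
  {d dp : σ}

theorem dvd_quotient_sub_of_four_gon (hd : d ≠ dp)
    (hpdef : ∀ w, (X (w dp) - X (w d)) * p w = ft (.inl w) - ft (.inr w))
    {w : Equiv.Perm σ}
    (hsq : (X (w dp) - X (w d)) ^ 2 ∣ ft (.inl w) - ft (.inr w)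
      + ft (.inl (w * Equiv.swap d dp)) - ft (.inr (w * Equiv.swap d dp))) :
    (X (w dp) - X (w d)) ∣ p w - p (w * Equiv.swap d dp) := by
  have hL : (X (w dp) - X (w d) : MvPolynomial σ R) ≠ 0 :=
    (prime_X_sub_X (w.injective.ne hd.symm)).ne_zero
  have hτ := hpdef (w * Equiv.swap d dp)
  simp only [Equiv.Perm.mul_apply, Equiv.swap_apply_left, Equiv.swap_apply_right] at hτ
  refine (mul_dvd_mul_iff_left hL).1 ?_
  rw [← sq]
  convert hsq using 1
  linear_combination hpdef w + hτ

theorem dvd_quotient_sub_of_edge_ne (hd : d ≠ dp)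
    (hpdef : ∀ w, (X (w dp) - X (w d)) * p w = ft (.inl w) - ft (.inr w))
    {w : Equiv.Perm σ} {i j : σ} (hij : i ≠ j) (hne : s(dp, d) ≠ s(i, j))
    (hl : (X (w i) - X (w j)) ∣ ft (.inl w) - ft (.inl (w * Equiv.swap i j)))
    (hr : (X (w i) - X (w j)) ∣ ft (.inr w) - ft (.inr (w * Equiv.swap i j))) :
    (X (w i) - X (w j)) ∣ p w - p (w * Equiv.swap i j) := by
  refine (prime_X_sub_X (w.injective.ne hij)).dvd_sub_of_dvd_mul_sub_mul
    (L' := X (w (Equiv.swap i j dp)) - X (w (Equiv.swap i j d)))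
    (X_sub_X_not_dvd (w.injective.ne hd.symm) ?_) ?_ ?_
  · simpa only [Sym2.map_mk] using (Sym2.map.injective w.injective).ne hne
  · have := (sub_dvd_apply_swap_sub (fun k => (X (w k) : MvPolynomial σ R)) i j d).sub
      (sub_dvd_apply_swap_sub (fun k => (X (w k) : MvPolynomial σ R)) i j dp)
    convert this using 1; ring
  · have := hpdef (w * Equiv.swap i j)
    simp only [Equiv.Perm.mul_apply] at this
    rw [hpdef w, this]
    convert hl.sub hr using 1; ring

end Quotient

theorem quotient_p_mem_HTX_general (n : ℕ) (h hm : Fin n → Fin n) (d₀ d dp dm : Fin n)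
    (hdp : (dp : ℕ) = (d : ℕ) + 1) (hdm : (dm : ℕ) + 1 = (d : ℕ))
    (hinv : ∀ j, h j = d ↔ j = d₀)
    (hhm : hm = Function.update h d₀ dm)
    (ft : Equiv.Perm (Fin n) ⊕ Equiv.Perm (Fin n) → MvPolynomial (Fin n) ℂ)
    (hft : ft ∈ HTtilde n h hm d₀ d dp)
    (p : Equiv.Perm (Fin n) → MvPolynomial (Fin n) ℂ)
    (hpdef : ∀ w : Equiv.Perm (Fin n),
      (X (w dp) - X (w d)) * p w = ft (Sum.inl w) - ft (Sum.inr w)) :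
    p ∈ HTX n hm ∧
    ∀ w : Equiv.Perm (Fin n),
      (X (w dp) - X (w d)) ∣ (p w - p (w * Equiv.swap d dp)) := by
  obtain ⟨hl, hr, -, hsq⟩ := hft
  have hddp : d < dp := Fin.lt_def.2 (by omega)
  have hm_le : ∀ j, hm j ≤ h j := by
    intro j
    subst hhm
    rcases eq_or_ne j d₀ with rfl | hj
    · rw [Function.update_self, (hinv j).2 rfl, Fin.le_def]
      omega
    · rw [Function.update_of_ne hj]
  have hτ : ∀ w : Equiv.Perm (Fin n), (X (w dp) - X (w d)) ∣ (p w - p (w * Equiv.swap d dp)) :=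
    fun w => dvd_quotient_sub_of_four_gon hddp.ne hpdef (hsq w)
  refine ⟨fun w i j hji hij => ?_, hτ⟩
  by_cases hedge : s(dp, d) = s(i, j)
  · obtain ⟨rfl, rfl⟩ : dp = i ∧ d = j := by
      rcases Sym2.eq_iff.1 hedge with hij | ⟨rfl, rfl⟩
      exacts [hij, absurd hji hddp.asymm]
    rw [Equiv.swap_comm]
    exact hτ w
  · exact dvd_quotient_sub_of_edge_ne hddp.ne hpdef hji.ne' hedge
      (hl w i j hji (hij.trans (hm_le j))) (hr w i j hji (.inl hij))

/-- For `f̃ ∈ H*_T(G̃, s)`, the element `p` defined by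
`(t_{w(d+1)} − t_{w(d)})·p(w) = f̃(w) − f̃(°w)` lies in `H*_T(G₋)`,
and moreover `p(w) ≡ p(wτ) mod (t_{w(d+1)} − t_{w(d)})` for all `w`. -/
theorem quotient_p_mem_HTX (n : ℕ) (h hm hp : Fin n → Fin n) (d₀ d dp dm : Fin n)
    (hmono : Monotone h) (hle : ∀ j, j ≤ h j)
    (hd₀d : d₀ < d) (hdp : (dp : ℕ) = (d : ℕ) + 1) (hdm : (dm : ℕ) + 1 = (d : ℕ))
    (hcol : h d = h dp) (hinv : ∀ j, h j = d ↔ j = d₀)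
    (hhm : hm = Function.update h d₀ dm) (hhp : hp = Function.update h d₀ dp)
    (ft : Equiv.Perm (Fin n) ⊕ Equiv.Perm (Fin n) → MvPolynomial (Fin n) ℂ)
    (hft : ft ∈ HTtilde n h hm d₀ d dp)
    (p : Equiv.Perm (Fin n) → MvPolynomial (Fin n) ℂ)
    (hpdef : ∀ w : Equiv.Perm (Fin n),
      (X (w dp) - X (w d)) * p w = ft (Sum.inl w) - ft (Sum.inr w)) :
    p ∈ HTX n hm ∧
    ∀ w : Equiv.Perm (Fin n),
      (X (w dp) - X (w d)) ∣ (p w - p (w * Equiv.swap d dp)) :=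
  quotient_p_mem_HTX_general n h hm d₀ d dp dm hdp hdm hinv hhm ft hft p hpdef
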